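/- arXiv:1911.05171 — 2 statements merged into one kernel-verified Lean document; each statement's English description precedes it below -/
import Mathlib

section
/- In the MPL model, assume: (i) there is K > 0 such that |u_c(x) − u_c(y)| > K·|x − y| for every certainty equivalent c and all x ≠ y in [x̲, x̄]; (ii) there is M > 0 with u_c(x̄) − u_c(x̲) ≤ M for every c; (iii) p_{t+1} < p_t and p_{t+1} < (K·ℓ/(2M))·p_t for all t; (iv) r(c) > c for all c. Then for every t ∈ {1,…,n−1}, r(x_t) = x_{t+1}. -/
/-!
Fix `c = x_t`. Since `r(c) > c`, the report is some `x_s` with `s > t`. If `s ≥ t + 2`, stopping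
at `t + 1` instead would be strictly better: by (i) the gain `Payoff(c, t+1) - u_c(c)` exceeds
`p_{t+1} K ℓ`, while by (ii), the monotonicity of `p` and (iii) the gain at `s` is at most
`p_s M ≤ p_{t+2} M < p_{t+1} K ℓ / 2`. This contradicts the maximality of `r(c)`.
-/

open Set

noncomputable def grid (a b : ℝ) (n k : ℕ) : ℝ := a + k * ((b - a) / n)

lemma grid_succ_sub (a b : ℝ) (n k : ℕ) : grid a b n (k + 1) - grid a b n k = (b - a) / n := by
  simp only [grid]; push_cast; ring

section Grid

variable {a b : ℝ} {n : ℕ}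

lemma grid_strictMono (hab : a < b) (hn : 0 < n) : StrictMono (grid a b n) :=
  strictMono_nat_of_lt_succ fun k => by
    have : 0 < (b - a) / n := div_pos (sub_pos.2 hab) (by exact_mod_cast hn)
    linarith [grid_succ_sub a b n k]

lemma grid_mem_Icc (hab : a ≤ b) {k : ℕ} (hk : k ≤ n) : grid a b n k ∈ Icc a b := by
  rcases Nat.eq_zero_or_pos n with rfl | hn
  · simp [grid, hab]
  have hn' : (0 : ℝ) < n := by exact_mod_cast hn
  have hk' : (k : ℝ) ≤ n := by exact_mod_cast hk
  have hstep : 0 ≤ (b - a) / n := div_nonneg (sub_nonneg.2 hab) hn'.le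
  refine ⟨le_add_of_nonneg_right (by positivity), ?_⟩
  calc grid a b n k ≤ a + n * ((b - a) / n) := by unfold grid; gcongr
    _ = b := by field_simp; ring

lemma grid_mem_Ioo (hab : a < b) {k : ℕ} (hk0 : 0 < k) (hkn : k < n) :
    grid a b n k ∈ Ioo a b := by
  have hmono := grid_strictMono hab (hk0.trans hkn)
  have h0 : grid a b n 0 = a := by simp [grid]
  have hn : grid a b n n = b := by
    simp only [grid]; field_simp [(Nat.cast_pos.2 (hk0.trans hkn)).ne']; ring
  exact ⟨h0.symm.trans_lt (hmono hk0), (hmono hkn).trans_eq hn⟩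

end Grid

lemma mul_sub_lt_sub_of_strictMonoOn {s : Set ℝ} {f : ℝ → ℝ} {K y z : ℝ}
    (hf : StrictMonoOn f s) (hinv : K * |y - z| < |f y - f z|) (hy : y ∈ s) (hz : z ∈ s)
    (hzy : z < y) : K * (y - z) < f y - f z := by
  rwa [abs_of_pos (sub_pos.2 hzy), abs_of_pos (sub_pos.2 (hf hz hy hzy))] at hinv

lemma sub_le_sub_of_monotoneOn_Icc {f : ℝ → ℝ} {a b y z : ℝ} (hf : MonotoneOn f (Icc a b))
    (hy : y ∈ Icc a b) (hz : z ∈ Icc a b) : f y - f z ≤ f b - f a :=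
  sub_le_sub (hf hy ⟨hy.1.trans hy.2, le_rfl⟩ hy.2) (hf ⟨le_rfl, hz.1.trans hz.2⟩ hz hz.1)

lemma strictAntiOn_Icc_of_succ_lt {α : Type*} [Preorder α] {f : ℕ → α} {m n : ℕ}
    (hf : ∀ k, m ≤ k → k + 1 ≤ n → f (k + 1) < f k) : StrictAntiOn f (Icc m n) :=
  strictAntiOn_of_succ_lt ordConnected_Icc fun k _ hk hk' => hf k hk.1 (by simpa using hk'.2)

-- The weighted gain `q * h` of a far report against the gain `p * g` of the next grid point.
lemma mul_lt_mul_of_lt_ratio {K ℓ M p q g h : ℝ} (hKℓ : 0 ≤ K * ℓ) (hM : 0 < M) (hp : 0 < p)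
    (hq : 0 ≤ q) (hqp : q < K * ℓ / (2 * M) * p) (hg : K * ℓ < g) (hh : h ≤ M) :
    q * h < p * g := by
  have hqM : q * M < K * ℓ * p / 2 := by
    calc q * M < K * ℓ / (2 * M) * p * M := mul_lt_mul_of_pos_right hqp hM
      _ = K * ℓ * p / 2 := by field_simp
  nlinarith [mul_le_mul_of_nonneg_left hh hq, mul_lt_mul_of_pos_left hg hp]

theorem stmt_4_general
    (xlo xhi : ℝ) (hlohi : xlo < xhi) (n : ℕ)
    (ℓ : ℝ) (hℓ : ℓ = (xhi - xlo) / n)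
    (x : ℕ → ℝ) (hxk : ∀ k : ℕ, x k = xlo + k * ℓ)
    (u : ℝ → ℝ → ℝ)
    (hu : ∀ c ∈ Set.Ioo xlo xhi, StrictMonoOn (u c) (Set.Icc xlo xhi))
    (p : ℕ → ℝ) (hp : ∀ t ∈ Finset.Icc 1 n, 0 < p t ∧ p t ≤ 1)
    (Payoff : ℝ → ℕ → ℝ)
    (hPayoff : ∀ c t, Payoff c t = p t * u c (x t) + (1 - p t) * u c c)
    (r : ℝ → ℕ)
    (hr_mem : ∀ c ∈ Set.Ioo xlo xhi, r c ∈ Finset.Icc 1 n)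
    (hr_max : ∀ c ∈ Set.Ioo xlo xhi, ∀ t ∈ Finset.Icc 1 n, t ≠ r c →
      Payoff c t < Payoff c (r c))
    (K : ℝ) (hK : 0 < K)
    (hinvLip : ∀ c ∈ Set.Ioo xlo xhi, ∀ y ∈ Set.Icc xlo xhi, ∀ z ∈ Set.Icc xlo xhi,
      y ≠ z → K * |y - z| < |u c y - u c z|)
    (M : ℝ) (hM : 0 < M)
    (hMb : ∀ c ∈ Set.Ioo xlo xhi, u c xhi - u c xlo ≤ M)
    (hpdec : ∀ t : ℕ, 1 ≤ t → t ≤ n - 1 → p (t + 1) < p t)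
    (hpratio : ∀ t : ℕ, 1 ≤ t → t ≤ n - 1 → p (t + 1) < (K * ℓ / (2 * M)) * p t)
    (hhigh : ∀ c ∈ Set.Ioo xlo xhi, c < x (r c)) :
    ∀ t ∈ Finset.Icc 1 (n - 1), r (x t) = t + 1 := by
  intro t ht
  obtain ⟨ht1, htn⟩ := Finset.mem_Icc.1 ht
  obtain rfl : x = grid xlo xhi n := funext fun k => by rw [hxk, hℓ, grid]
  set c := grid xlo xhi n t
  have hc : c ∈ Ioo xlo xhi := grid_mem_Ioo hlohi ht1 (by omega)
  have hgrid (k : ℕ) (hk : k ≤ n) := grid_mem_Icc hlohi.le hk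
  obtain ⟨hs1, hsn⟩ := Finset.mem_Icc.1 (hr_mem c hc)
  have hts : t < r c := (grid_strictMono hlohi (by omega)).lt_iff_lt.1 (hhigh c hc)
  by_contra hne
  have hbetter := hr_max c hc (t + 1) (Finset.mem_Icc.2 ⟨by omega, by omega⟩) (by omega)
  have hlt : c < grid xlo xhi n (t + 1) := grid_strictMono hlohi (by omega) (lt_add_one t)
  have hstep : grid xlo xhi n (t + 1) - c = ℓ := by rw [grid_succ_sub, hℓ]
  have hgain_next : K * ℓ < u c (grid xlo xhi n (t + 1)) - u c c := hstep ▸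
    mul_sub_lt_sub_of_strictMonoOn (hu c hc)
      (hinvLip c hc _ (hgrid _ (by omega)) _ (hgrid t (by omega)) hlt.ne')
      (hgrid _ (by omega)) (hgrid t (by omega)) hlt
  have hgain_far : u c (grid xlo xhi n (r c)) - u c c ≤ M :=
    (sub_le_sub_of_monotoneOn_Icc (hu c hc).monotoneOn (hgrid _ hsn)
      (Ioo_subset_Icc_self hc)).trans (hMb c hc)
  have hp_anti : StrictAntiOn p (Icc 1 n) :=
    strictAntiOn_Icc_of_succ_lt fun k hk hkn => hpdec k hk (by omega)
  have hp_far : p (r c) < K * ℓ / (2 * M) * p (t + 1) :=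
    (hp_anti.antitoneOn ⟨by omega, by omega⟩ ⟨hs1, hsn⟩ (by omega)).trans_lt
      (hpratio (t + 1) (by omega) (by omega))
  have := mul_lt_mul_of_lt_ratio (mul_pos hK (hstep ▸ sub_pos.2 hlt)).le hM
    (hp (t + 1) (by simp; omega)).1 (hp (r c) (by simp; omega)).1.le hp_far hgain_next hgain_far
  rw [hPayoff, hPayoff] at hbetter
  linarith

/-- MPL model, report function on the grid shifts by one: assuming
(i) an inverse Lipschitz condition with constant `K > 0` for all utilities,
(ii) a uniform bound `M > 0` on `u c x̄ − u c x̲`,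
(iii) `p (t+1) < p t` and `p (t+1) < (K·ℓ/(2M))·p t` for all `t`, and
(iv) every agent reports above his true certainty equivalent,
then `r (x t) = x (t+1)` for every `t ∈ {1,…,n−1}`. -/
theorem stmt_4
    (xlo xhi : ℝ) (hlohi : xlo < xhi) (n : ℕ) (hn : 2 ≤ n)
    (ℓ : ℝ) (hℓ : ℓ = (xhi - xlo) / n)
    (x : ℕ → ℝ) (hxk : ∀ k : ℕ, x k = xlo + k * ℓ)
    (u : ℝ → ℝ → ℝ)
    (hu : ∀ c ∈ Set.Ioo xlo xhi, StrictMonoOn (u c) (Set.Icc xlo xhi))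
    (p : ℕ → ℝ) (hp : ∀ t ∈ Finset.Icc 1 n, 0 < p t ∧ p t ≤ 1)
    (Payoff : ℝ → ℕ → ℝ)
    (hPayoff : ∀ c t, Payoff c t = p t * u c (x t) + (1 - p t) * u c c)
    (r : ℝ → ℕ)
    (hr_mem : ∀ c ∈ Set.Ioo xlo xhi, r c ∈ Finset.Icc 1 n)
    (hr_max : ∀ c ∈ Set.Ioo xlo xhi, ∀ t ∈ Finset.Icc 1 n, t ≠ r c →
      Payoff c t < Payoff c (r c))
    (K : ℝ) (hK : 0 < K)
    (hinvLip : ∀ c ∈ Set.Ioo xlo xhi, ∀ y ∈ Set.Icc xlo xhi, ∀ z ∈ Set.Icc xlo xhi,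
      y ≠ z → K * |y - z| < |u c y - u c z|)
    (M : ℝ) (hM : 0 < M)
    (hMb : ∀ c ∈ Set.Ioo xlo xhi, u c xhi - u c xlo ≤ M)
    (hpdec : ∀ t : ℕ, 1 ≤ t → t ≤ n - 1 → p (t + 1) < p t)
    (hpratio : ∀ t : ℕ, 1 ≤ t → t ≤ n - 1 → p (t + 1) < (K * ℓ / (2 * M)) * p t)
    (hhigh : ∀ c ∈ Set.Ioo xlo xhi, c < x (r c)) :
    ∀ t ∈ Finset.Icc 1 (n - 1), r (x t) = t + 1 :=
  stmt_4_general xlo xhi hlohi n ℓ hℓ x hxk u hu p hp Payoff hPayoff r hr_mem hr_max K hK hinvLip M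
    hM hMb hpdec hpratio hhigh
end

section
/- In the MPL model, assume additionally: (i) there are constants C₁, C₂ > 0 such that for all certainty equivalents c, c* and all x', x'' ∈ (x̲, x̄), |u_c(x') − u_{c*}(x'')| ≤ C₁·|c − c*| + C₂·|x' − x''|; (ii) there is λ > 0 such that |Payoff(c, s) − Payoff(c, t)| ≥ λ for every c and all s ≠ t; (iii) monotonicity: if c* ≥ c then u_{c*}(y) ≥ u_c(y) for all y. Let t ∈ {1,…,n−1} and suppose x_{t−1} < c < c* ≤ x_t with c* − c < λ/(2·(2C₁ + C₂)), and r(c*) ≤ x_{t+1}. Then r(c) ≤ x_{t+1}. -/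
/-!
Let `s = r c` and `s' = r c*`, and suppose `s ≠ s'`. At `c` the report `s` beats `s'` by at
least `λ`. Raising the type from `c` to `c*` does not lower the payoff of `s`, because
`u_c ≤ u_{c*}` pointwise and `u_c c ≤ u_c c* ≤ u_{c*} c*`; and it moves the payoff of `s'` by at
most `(2C₁ + C₂)(c* − c) < λ/2`. So `s` still beats `s'` at `c*`, contradicting `r c* = s'`.
The Lipschitz bound needs `x_{s'}` in the open interval, which holds because
`s' ≤ t + 1 < n`; when `t + 1 = n` the conclusion is trivial.
-/

lemma strictMono_of_eq_add_mul {a ℓ : ℝ} {x : ℕ → ℝ} (hℓ : 0 < ℓ)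
    (hx : ∀ k : ℕ, x k = a + k * ℓ) : StrictMono x := by
  intro j k hjk
  rw [hx, hx]
  gcongr

def mplPayoff (u : ℝ → ℝ → ℝ) (p x : ℕ → ℝ) (c : ℝ) (t : ℕ) : ℝ :=
  p t * u c (x t) + (1 - p t) * u c c

section mplPayoff

variable {u : ℝ → ℝ → ℝ} {p x : ℕ → ℝ} {c c' : ℝ} {t : ℕ}

lemma mplPayoff_le_mplPayoff (hp₀ : 0 ≤ p t) (hp₁ : p t ≤ 1)
    (hx : u c (x t) ≤ u c' (x t)) (hc : u c c ≤ u c' c') :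
    mplPayoff u p x c t ≤ mplPayoff u p x c' t := by
  unfold mplPayoff
  gcongr

lemma abs_mplPayoff_sub_le {S : Set ℝ} {C₁ C₂ : ℝ}
    (hLip : ∀ c ∈ S, ∀ c' ∈ S, ∀ y ∈ S, ∀ z ∈ S,
      |u c y - u c' z| ≤ C₁ * |c - c'| + C₂ * |y - z|)
    (hp₀ : 0 ≤ p t) (hp₁ : p t ≤ 1) (hc : c ∈ S) (hc' : c' ∈ S) (hx : x t ∈ S) :
    |mplPayoff u p x c t - mplPayoff u p x c' t| ≤ (2 * C₁ + C₂) * |c - c'| := by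
  have hdx : |u c (x t) - u c' (x t)| ≤ C₁ * |c - c'| := by
    simpa using hLip c hc c' hc' (x t) hx (x t) hx
  have hdc : |u c c - u c' c'| ≤ C₁ * |c - c'| + C₂ * |c - c'| := hLip c hc c' hc' c hc c' hc'
  have hsplit : mplPayoff u p x c t - mplPayoff u p x c' t =
      p t * (u c (x t) - u c' (x t)) + (1 - p t) * (u c c - u c' c') := by
    unfold mplPayoff; ring
  have hpx : |p t * (u c (x t) - u c' (x t))| ≤ |u c (x t) - u c' (x t)| := by
    rw [abs_mul, abs_of_nonneg hp₀]
    exact mul_le_of_le_one_left (abs_nonneg _) hp₁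
  have hpc : |(1 - p t) * (u c c - u c' c')| ≤ |u c c - u c' c'| := by
    rw [abs_mul, abs_of_nonneg (sub_nonneg.2 hp₁)]
    exact mul_le_of_le_one_left (abs_nonneg _) (by linarith)
  rw [hsplit]
  linarith [abs_add_le (p t * (u c (x t) - u c' (x t))) ((1 - p t) * (u c c - u c' c'))]

end mplPayoff

theorem stmt_5_general
    (xlo xhi : ℝ) (hlohi : xlo < xhi) (n : ℕ) (hn : 2 ≤ n)
    (ℓ : ℝ) (hℓ : ℓ = (xhi - xlo) / n)
    (x : ℕ → ℝ) (hxk : ∀ k : ℕ, x k = xlo + k * ℓ)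
    (u : ℝ → ℝ → ℝ)
    (hu : ∀ c ∈ Set.Ioo xlo xhi, StrictMonoOn (u c) (Set.Icc xlo xhi))
    (p : ℕ → ℝ) (hp : ∀ t ∈ Finset.Icc 1 n, 0 < p t ∧ p t ≤ 1)
    (Payoff : ℝ → ℕ → ℝ)
    (hPayoff : ∀ c t, Payoff c t = p t * u c (x t) + (1 - p t) * u c c)
    (r : ℝ → ℕ)
    (hr_mem : ∀ c ∈ Set.Ioo xlo xhi, r c ∈ Finset.Icc 1 n)
    (hr_max : ∀ c ∈ Set.Ioo xlo xhi, ∀ t ∈ Finset.Icc 1 n, t ≠ r c →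
      Payoff c t < Payoff c (r c))
    (C₁ C₂ : ℝ) (hC₁ : 0 < C₁) (hC₂ : 0 < C₂)
    (hLip : ∀ c ∈ Set.Ioo xlo xhi, ∀ c' ∈ Set.Ioo xlo xhi,
      ∀ y ∈ Set.Ioo xlo xhi, ∀ z ∈ Set.Ioo xlo xhi,
        |u c y - u c' z| ≤ C₁ * |c - c'| + C₂ * |y - z|)
    (lam : ℝ) (hlam : 0 < lam)
    (hgap : ∀ c ∈ Set.Ioo xlo xhi, ∀ s ∈ Finset.Icc 1 n, ∀ t ∈ Finset.Icc 1 n,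
      s ≠ t → lam ≤ |Payoff c s - Payoff c t|)
    (hmono : ∀ c ∈ Set.Ioo xlo xhi, ∀ c' ∈ Set.Ioo xlo xhi, c ≤ c' →
      ∀ y, u c y ≤ u c' y)
    (t : ℕ) (ht2 : t ≤ n - 1)
    (c cst : ℝ) (h1 : x (t - 1) < c) (h2 : c < cst) (h3 : cst ≤ x t)
    (h4 : cst - c < lam / (2 * (2 * C₁ + C₂)))
    (h5 : x (r cst) ≤ x (t + 1)) :
    x (r c) ≤ x (t + 1) := by
  obtain rfl : Payoff = mplPayoff u p x := funext₂ hPayoff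
  have hx : StrictMono x :=
    strictMono_of_eq_add_mul (div_pos (sub_pos.2 hlohi) (by positivity)) (hℓ ▸ hxk)
  have hx₀ : x 0 = xlo := by simp [hxk]
  have hxn : x n = xhi := by rw [hxk, hℓ]; field_simp; ring
  have hxt : x t < xhi := hxn ▸ hx (by omega)
  have hxt₁ : xlo ≤ x (t - 1) := hx₀ ▸ hx.monotone (Nat.zero_le _)
  have hc : c ∈ Set.Ioo xlo xhi := ⟨by linarith, by linarith⟩
  have hcst : cst ∈ Set.Ioo xlo xhi := ⟨by linarith, by linarith⟩
  have hs := hr_mem c hc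
  have hs' := hr_mem cst hcst
  rcases eq_or_ne (t + 1) n with htn | htn
  · exact hx.monotone (htn ▸ (Finset.mem_Icc.1 hs).2)
  have hs'_le : r cst ≤ t + 1 := hx.le_iff_le.1 h5
  have hxs' : x (r cst) ∈ Set.Ioo xlo xhi :=
    ⟨hx₀ ▸ hx (Finset.mem_Icc.1 hs').1, hxn ▸ hx (by omega)⟩
  suffices r c = r cst from this ▸ h5
  by_contra hne
  obtain ⟨hp₀, hp₁⟩ := hp _ hs
  obtain ⟨hp₀', hp₁'⟩ := hp _ hs'
  have hwin : lam ≤ mplPayoff u p x c (r c) - mplPayoff u p x c (r cst) := by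
    have := hgap c hc _ hs _ hs' hne
    rwa [abs_of_pos (sub_pos.2 (hr_max c hc _ hs' (Ne.symm hne)))] at this
  have hrise : mplPayoff u p x c (r c) ≤ mplPayoff u p x cst (r c) :=
    mplPayoff_le_mplPayoff hp₀.le hp₁ (hmono c hc cst hcst h2.le _)
      ((hu c hc ⟨hc.1.le, hc.2.le⟩ ⟨hcst.1.le, hcst.2.le⟩ h2).le.trans
        (hmono c hc cst hcst h2.le _))
  have hmove : |mplPayoff u p x c (r cst) - mplPayoff u p x cst (r cst)| < lam / 2 := by
    refine (abs_mplPayoff_sub_le hLip hp₀'.le hp₁' hc hcst hxs').trans_lt ?_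
    rw [abs_sub_comm, abs_of_pos (sub_pos.2 h2)]
    rw [lt_div_iff₀ (by positivity)] at h4
    linarith
  have := hr_max cst hcst _ hs hne
  linarith [abs_lt.1 hmove]

/-- MPL model, weak monotonicity of the report function: assume additionally
(i) a Lipschitz-type condition across types and arguments with constants `C₁, C₂ > 0`,
(ii) a payoff gap `λ > 0` between distinct reports, and
(iii) agents with higher certainty equivalents value money more.
If `t ∈ {1,…,n−1}`, `x (t−1) < c < c* ≤ x t` with `c* − c < λ/(2(2C₁+C₂))`, and
`r c* ≤ x (t+1)`, then `r c ≤ x (t+1)`. -/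
theorem stmt_5
    (xlo xhi : ℝ) (hlohi : xlo < xhi) (n : ℕ) (hn : 2 ≤ n)
    (ℓ : ℝ) (hℓ : ℓ = (xhi - xlo) / n)
    (x : ℕ → ℝ) (hxk : ∀ k : ℕ, x k = xlo + k * ℓ)
    (u : ℝ → ℝ → ℝ)
    (hu : ∀ c ∈ Set.Ioo xlo xhi, StrictMonoOn (u c) (Set.Icc xlo xhi))
    (p : ℕ → ℝ) (hp : ∀ t ∈ Finset.Icc 1 n, 0 < p t ∧ p t ≤ 1)
    (Payoff : ℝ → ℕ → ℝ)
    (hPayoff : ∀ c t, Payoff c t = p t * u c (x t) + (1 - p t) * u c c)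
    (r : ℝ → ℕ)
    (hr_mem : ∀ c ∈ Set.Ioo xlo xhi, r c ∈ Finset.Icc 1 n)
    (hr_max : ∀ c ∈ Set.Ioo xlo xhi, ∀ t ∈ Finset.Icc 1 n, t ≠ r c →
      Payoff c t < Payoff c (r c))
    (C₁ C₂ : ℝ) (hC₁ : 0 < C₁) (hC₂ : 0 < C₂)
    (hLip : ∀ c ∈ Set.Ioo xlo xhi, ∀ c' ∈ Set.Ioo xlo xhi,
      ∀ y ∈ Set.Ioo xlo xhi, ∀ z ∈ Set.Ioo xlo xhi,
        |u c y - u c' z| ≤ C₁ * |c - c'| + C₂ * |y - z|)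
    (lam : ℝ) (hlam : 0 < lam)
    (hgap : ∀ c ∈ Set.Ioo xlo xhi, ∀ s ∈ Finset.Icc 1 n, ∀ t ∈ Finset.Icc 1 n,
      s ≠ t → lam ≤ |Payoff c s - Payoff c t|)
    (hmono : ∀ c ∈ Set.Ioo xlo xhi, ∀ c' ∈ Set.Ioo xlo xhi, c ≤ c' →
      ∀ y, u c y ≤ u c' y)
    (t : ℕ) (ht1 : 1 ≤ t) (ht2 : t ≤ n - 1)
    (c cst : ℝ) (h1 : x (t - 1) < c) (h2 : c < cst) (h3 : cst ≤ x t)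
    (h4 : cst - c < lam / (2 * (2 * C₁ + C₂)))
    (h5 : x (r cst) ≤ x (t + 1)) :
    x (r c) ≤ x (t + 1) :=
  stmt_5_general xlo xhi hlohi n hn ℓ hℓ x hxk u hu p hp Payoff hPayoff r hr_mem hr_max C₁ C₂ hC₁
    hC₂ hLip lam hlam hgap hmono t ht2 c cst h1 h2 h3 h4 h5
end
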